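/- Let p > 2, k > 0, let a: ℝ → ℝ be smooth with a_{θθ} = -Va (V as in the quasiradial ODE) and (a, a_θ) never both zero. Set A = a_θ² + k²a², B = a_θ² + (p-1)k²a², τq = -(p-2)k·a·a_θ·B^{-1}. Then the sign of (τq)'(θ) equals the sign of ((p-1)k²a² - a_θ²)(Va² + a_θ²); so if V > 0 and a_θ² < (p-1)k²a², then (τq)'(θ) > 0. -/

import Mathlib

noncomputable def Vpot (p k x y : ℝ) : ℝ :=
  (((2*p-3)*k^2 - (p-2)*k)*y^2 + ((p-1)*k^2 - (p-2)*k)*k^2*x^2)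
    / ((p-1)*y^2 + k^2*x^2)

theorem stmt_19 (p k : ℝ) (hp : 2 < p) (hk : 0 < k) (a : ℝ → ℝ)
    (ha : ContDiff ℝ (⊤ : ℕ∞) a)
    (hne : ∀ θ, (a θ, deriv a θ) ≠ (0, 0))
    (hODE : ∀ θ, deriv (deriv a) θ = -(Vpot p k (a θ) (deriv a θ)) * a θ)
    (θ : ℝ) :
    Real.sign (deriv (fun s => -((p-2)*k*(a s)*(deriv a s)
          * ((deriv a s)^2 + (p-1)*k^2*(a s)^2)⁻¹)) θ)
      = Real.sign (((p-1)*k^2*(a θ)^2 - (deriv a θ)^2)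
          * (Vpot p k (a θ) (deriv a θ) * (a θ)^2 + (deriv a θ)^2))
    ∧ (0 < Vpot p k (a θ) (deriv a θ) →
        (deriv a θ)^2 < (p-1)*k^2*(a θ)^2 →
        0 < deriv (fun s => -((p-2)*k*(a s)*(deriv a s)
          * ((deriv a s)^2 + (p-1)*k^2*(a s)^2)⁻¹)) θ) := by
  have hp1 : (0:ℝ) < p - 1 := by linarith
  have hp2 : (0:ℝ) < p - 2 := by linarith
  have hne' : a θ ≠ 0 ∨ deriv a θ ≠ 0 := by
    have h := hne θ
    by_contra h'
    push_neg at h'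
    exact h (by simp [h'.1, h'.2])
  have hBpos : ∀ s, 0 < (deriv a s)^2 + (p-1)*k^2*(a s)^2 := by
    intro s
    have h := hne s
    rcases eq_or_ne (a s) 0 with h1 | h1
    · have h2 : deriv a s ≠ 0 := by
        intro h2; exact h (by simp [h1, h2])
      have h3 : (p-1)*k^2*(a s)^2 = 0 := by rw [h1]; ring
      have : 0 < (deriv a s)^2 := by positivity
      linarith
    · have : 0 < (p-1)*k^2*(a s)^2 := by positivity
      nlinarith [sq_nonneg (deriv a s)]
  have hWpos : 0 < (p-1)*(deriv a θ)^2 + k^2*(a θ)^2 := by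
    rcases hne' with h1 | h1
    · have : 0 < k^2*(a θ)^2 := by positivity
      nlinarith [sq_nonneg (deriv a θ)]
    · have : 0 < (p-1)*(deriv a θ)^2 := by positivity
      nlinarith [sq_nonneg (k*(a θ))]
  have hBne : (deriv a θ)^2 + (p-1)*k^2*(a θ)^2 ≠ 0 := ne_of_gt (hBpos θ)
  have had : Differentiable ℝ (deriv a) :=
    (contDiff_infty_iff_deriv.mp (contDiff_infty_iff_deriv.mp (ha.of_le (by simp))).2).1
  have ha' : HasDerivAt a (deriv a θ) θ :=
    ((ha.differentiable (by simp)).differentiableAt).hasDerivAt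
  have hd' : HasDerivAt (deriv a) (-(Vpot p k (a θ) (deriv a θ)) * a θ) θ := by
    have h := (had.differentiableAt (x := θ)).hasDerivAt
    rwa [hODE θ] at h
  have hf : HasDerivAt (fun s => -((p-2)*k*(a s)*(deriv a s)
        * ((deriv a s)^2 + (p-1)*k^2*(a s)^2)⁻¹))
      (-(((((p-2)*k) * deriv a θ) * deriv a θ
          + ((p-2)*k*(a θ)) * (-(Vpot p k (a θ) (deriv a θ)) * a θ))
            * ((deriv a θ)^2 + (p-1)*k^2*(a θ)^2)⁻¹
        + ((p-2)*k*(a θ)*(deriv a θ))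
          * (-(((2:ℕ) * (deriv a θ)^1 * (-(Vpot p k (a θ) (deriv a θ)) * a θ))
              + (p-1)*k^2 * ((2:ℕ) * (a θ)^1 * deriv a θ))
            / ((deriv a θ)^2 + (p-1)*k^2*(a θ)^2)^2))) θ := by
    exact (((ha'.const_mul ((p-2)*k)).mul hd').mul
      (((hd'.pow 2).add ((ha'.pow 2).const_mul ((p-1)*k^2))).inv hBne)).neg
  rw [hf.deriv]
  set V := Vpot p k (a θ) (deriv a θ) with hV
  set D := -(((((p-2)*k) * deriv a θ) * deriv a θ
          + ((p-2)*k*(a θ)) * (-V * a θ))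
            * ((deriv a θ)^2 + (p-1)*k^2*(a θ)^2)⁻¹
        + ((p-2)*k*(a θ)*(deriv a θ))
          * (-(((2:ℕ) * (deriv a θ)^1 * (-V * a θ))
              + (p-1)*k^2 * ((2:ℕ) * (a θ)^1 * deriv a θ))
            / ((deriv a θ)^2 + (p-1)*k^2*(a θ)^2)^2)) with hD
  set E := ((p-1)*k^2*(a θ)^2 - (deriv a θ)^2) * (V * (a θ)^2 + (deriv a θ)^2) with hE
  have hC : (0:ℝ) < (p-2)*k / ((deriv a θ)^2 + (p-1)*k^2*(a θ)^2)^2 := by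
    have := hBpos θ; positivity
  have hDE : D = ((p-2)*k / ((deriv a θ)^2 + (p-1)*k^2*(a θ)^2)^2) * E := by
    rw [hD, hE, hV]
    unfold Vpot
    field_simp
    ring
  have hsign : Real.sign D = Real.sign E := by
    rw [hDE]
    rcases lt_trichotomy E 0 with h | h | h
    · rw [Real.sign_of_neg h, Real.sign_of_neg (by nlinarith)]
    · rw [h, mul_zero]
    · rw [Real.sign_of_pos h, Real.sign_of_pos (by nlinarith)]
  refine ⟨hsign, fun hVpos hlt => ?_⟩
  have hx : a θ ≠ 0 := by
    intro h0
    rw [h0] at hlt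
    nlinarith [sq_nonneg (deriv a θ)]
  have hEpos : 0 < E := by
    rw [hE]
    have h1 : 0 < V * (a θ)^2 := by positivity
    nlinarith [sq_nonneg (deriv a θ)]
  rw [hDE]
  positivity
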